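/- Let ϑ ∈ I, let ζ be the unique fluid model solution with initial measure ϑ, and let w be the unique workload fluid model solution with w(0) = w_ϑ. Then w_{ζ(t)} = w(t) for all t ≥ 0, where w_{ζ(t)} = sup{x ≥ 0 : ζ_+(t)([x,∞)×[0,∞)) > 0}. -/

import Mathlib

/-!
Mass arriving at time `s` is placed at first coordinate `w s` and then drifts towards `0` at unit
speed, so at time `t` it sits at `w s - (t - s)`; the initial mass sits at most at `w 0 - t`.
Since `s ↦ w s + s` is nondecreasing, nothing lies beyond `w t`. Conversely, by continuity of
`w`, mass arriving just before `t` sits arbitrarily close to `w t`, and a positive fraction of it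
still has positive second coordinate. That `w` is the workload driving `ζ` follows from
uniqueness of workload solutions, a comparison argument using that each `G_k` is antitone.
-/

open MeasureTheory Set Filter Topology
open scoped ENNReal

noncomputable section

namespace OverloadedFIFO

/-- The complement `G(x) = Γ((x, ∞))` of the cumulative distribution function of `Γ`. -/
def Gk (Γ : MeasureTheory.Measure ℝ) (x : ℝ) : ℝ := (Γ (Set.Ioi x)).toReal

/-- Model data: `K` job classes with arrival rates `lam`, service rates `mu`, and
deadline (patience) distributions `Γ`, in the overloaded regime `ρ > 1`.  Each `Γ k` is a
Borel probability measure on `[0,∞)` (no mass on negatives), with continuous c.d.f.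
(no atoms, in particular `Γ k {0} = 0`) and finite mean. -/
structure Data (K : ℕ) where
  lam : Fin K → ℝ
  mu : Fin K → ℝ
  Γ : Fin K → MeasureTheory.Measure ℝ
  lam_pos : ∀ k, 0 < lam k
  mu_pos : ∀ k, 0 < mu k
  Γ_prob : ∀ k, MeasureTheory.IsProbabilityMeasure (Γ k)
  Γ_null_neg : ∀ k, Γ k (Set.Iio 0) = 0
  Γ_noAtom : ∀ k, ∀ x : ℝ, Γ k {x} = 0
  Γ_finite_mean : ∀ k, MeasureTheory.Integrable id (Γ k)
  rho_gt_one : 1 < ∑ k, lam k / mu k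

instance {K : ℕ} (D : Data K) (k : Fin K) : IsProbabilityMeasure (D.Γ k) := D.Γ_prob k

/-- `ρ_k = λ_k / μ_k`. -/
def Data.rho {K : ℕ} (D : Data K) (k : Fin K) : ℝ := D.lam k / D.mu k

/-- `ρ = Σ_k ρ_k`. -/
def Data.rhoTot {K : ℕ} (D : Data K) : ℝ := ∑ k, D.rho k

/-- A workload fluid model solution: a nonnegative function `w` on `[0,∞)` satisfying
`w(t) = w(0) + Σ_k ρ_k ∫_0^t G_k(w(s)) ds − t` for all `t ≥ 0`. -/
def IsWorkloadSol {K : ℕ} (D : Data K) (w : ℝ → ℝ) : Prop :=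
  (∀ t : ℝ, 0 ≤ t → 0 ≤ w t) ∧
  (∀ k : Fin K, ∀ t : ℝ, 0 ≤ t →
    IntervalIntegrable (fun s => Gk (D.Γ k) (w s)) volume 0 t) ∧
  (∀ t : ℝ, 0 ≤ t →
    w t = w 0 + (∑ k, D.rho k * ∫ s in (0:ℝ)..t, Gk (D.Γ k) (w s)) - t)

/-- `w_l = sup {u ≥ 0 : Σ_k ρ_k G_k(u) > 1}`. -/
def wl {K : ℕ} (D : Data K) : ℝ :=
  sSup {u : ℝ | 0 ≤ u ∧ 1 < ∑ k, D.rho k * Gk (D.Γ k) u}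

/-- `w_u = sup {u ≥ 0 : Σ_k ρ_k G_k(u) ≥ 1}`. -/
def wu {K : ℕ} (D : Data K) : ℝ :=
  sSup {u : ℝ | 0 ≤ u ∧ 1 ≤ ∑ k, D.rho k * Gk (D.Γ k) u}

/-- `d_max = max_k sup {x ≥ 0 : G_k(x) > 0} ∈ (0,∞]`, as an extended nonnegative real. -/
def dmax {K : ℕ} (D : Data K) : ℝ≥0∞ :=
  ⨆ k, sSup (ENNReal.ofReal '' {x : ℝ | 0 ≤ x ∧ 0 < Gk (D.Γ k) x})

/-- `τ(t) = inf {s ∈ [0,t] : w(s) + s ≥ t}`. -/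
def tauF (w : ℝ → ℝ) (t : ℝ) : ℝ := sInf {s : ℝ | 0 ≤ s ∧ s ≤ t ∧ t ≤ w s + s}

/-- The nonnegative quadrant `[0,∞)²`. -/
def Q : Set (ℝ × ℝ) := {p | 0 ≤ p.1 ∧ 0 ≤ p.2}

/-- The shift `B_x = {y ∈ [0,∞)² : y − x ∈ B}` of a set `B ⊆ [0,∞)²`. -/
def shift (B : Set (ℝ × ℝ)) (x : ℝ × ℝ) : Set (ℝ × ℝ) :=
  {y | y ∈ Q ∧ (y.1 - x.1, y.2 - x.2) ∈ B}

/-- Diagonal shift `B_t = B_{(t,t)}`. -/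
def shiftd (B : Set (ℝ × ℝ)) (t : ℝ) : Set (ℝ × ℝ) := shift B (t, t)

/-- The set `C = ([0,∞)×{0}) ∪ ({0}×[0,∞))`. -/
def Cset : Set (ℝ × ℝ) := {p | (0 ≤ p.1 ∧ p.2 = 0) ∨ (p.1 = 0 ∧ 0 ≤ p.2)}

/-- The `κ`-enlargement `B^κ = {x ∈ [0,∞)² : inf_{y ∈ B} ‖x−y‖ < κ}` (Euclidean norm). -/
def enlarge (B : Set (ℝ × ℝ)) (κ : ℝ) : Set (ℝ × ℝ) :=
  {x | x ∈ Q ∧ ∃ y ∈ B, Real.sqrt ((x.1 - y.1) ^ 2 + (x.2 - y.2) ^ 2) < κ}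

/-- `w_ϑ = sup {x ≥ 0 : ϑ_+([x,∞)×[0,∞)) > 0}` for a `K`-tuple `ϑ` of measures on `[0,∞)²`. -/
def wMeas {K : ℕ} (ϑ : Fin K → MeasureTheory.Measure (ℝ × ℝ)) : ℝ :=
  sSup {x : ℝ | 0 ≤ x ∧ 0 < ∑ k, ϑ k (Set.Ici x ×ˢ Set.Ici (0:ℝ))}

/-- Membership in the set `I` of admissible initial measures: each `ϑ k` is a finite Borel
measure on `[0,∞)²`; (I.1) the superposition charges no corner set `C_x`, `x ∈ [0,∞)²`;
(I.2) `w_ϑ < ∞`; (I.3) `max_k G_k(w_ϑ − ε) > 0` for every `ε > 0`. -/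
def MemI {K : ℕ} (D : Data K) (ϑ : Fin K → MeasureTheory.Measure (ℝ × ℝ)) : Prop :=
  (∀ k, IsFiniteMeasure (ϑ k)) ∧
  (∀ k, ϑ k Qᶜ = 0) ∧
  (∀ x ∈ Q, (∑ k, ϑ k (shift Cset x)) = 0) ∧
  BddAbove {x : ℝ | 0 ≤ x ∧ 0 < ∑ k, ϑ k (Set.Ici x ×ˢ Set.Ici (0:ℝ))} ∧
  (∀ ε : ℝ, 0 < ε → ∃ k, 0 < Gk (D.Γ k) (wMeas ϑ - ε))

/-- `δ⁺_w`: the Dirac measure at `w` if `w > 0`, and the zero measure otherwise. -/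
def deltaPlus (w : ℝ) : MeasureTheory.Measure ℝ :=
  if 0 < w then MeasureTheory.Measure.dirac w else 0

instance (w : ℝ) : SFinite (deltaPlus w) := by
  unfold deltaPlus; split_ifs <;> infer_instance

/-- `(δ⁺_w × Γ)(B)`, as a real number. -/
def kern (Γ : MeasureTheory.Measure ℝ) (w : ℝ) (B : Set (ℝ × ℝ)) : ℝ :=
  (((deltaPlus w).prod Γ) B).toReal

/-- A (measure-valued) fluid model solution with initial measure `ϑ`: a family
`ζ(t) = (ζ_1(t),…,ζ_K(t))` of finite Borel measures on `[0,∞)²` with `ζ(0) = ϑ` satisfying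
`ζ_k(t)(B) = ϑ_k(B_t) + λ_k ∫_0^t (δ⁺_{w(s)} × Γ_k)(B_{t−s}) ds` for every Borel
`B ⊆ [0,∞)²` and `t ≥ 0`, where `w` is the (unique) workload fluid model solution with
`w(0) = w_ϑ`. -/
def IsFluidSol {K : ℕ} (D : Data K) (ϑ : Fin K → MeasureTheory.Measure (ℝ × ℝ))
    (ζ : ℝ → Fin K → MeasureTheory.Measure (ℝ × ℝ)) : Prop :=
  ∃ w : ℝ → ℝ, IsWorkloadSol D w ∧ w 0 = wMeas ϑ ∧
    (∀ t : ℝ, 0 ≤ t → ∀ k, IsFiniteMeasure (ζ t k) ∧ ζ t k Qᶜ = 0) ∧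
    (∀ k, ζ 0 k = ϑ k) ∧
    (∀ k, ∀ B : Set (ℝ × ℝ), B ⊆ Q → MeasurableSet B → ∀ t : ℝ, 0 ≤ t →
      IntervalIntegrable (fun s => kern (D.Γ k) (w s) (shiftd B (t - s))) volume 0 t ∧
      ζ t k B = ϑ k (shiftd B t) +
        ENNReal.ofReal (D.lam k * ∫ s in (0:ℝ)..t, kern (D.Γ k) (w s) (shiftd B (t - s))))

/-- The candidate invariant state `θ^w`:
`θ^w_k(B) = λ_k ∫_0^w Γ_k({p ≥ u : (w−u, p−u) ∈ B}) du`. -/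
def thetaW {K : ℕ} (D : Data K) (w : ℝ) (k : Fin K) : MeasureTheory.Measure (ℝ × ℝ) :=
  ENNReal.ofReal (D.lam k) •
    MeasureTheory.Measure.map (fun up : ℝ × ℝ => (w - up.1, up.2 - up.1))
      ((((MeasureTheory.volume.restrict (Set.Ioo (0:ℝ) w))).prod (D.Γ k)).restrict
        {up : ℝ × ℝ | up.1 ≤ up.2})

section Workload

variable {K : ℕ} {D : Data K}

lemma Data.rho_nonneg (D : Data K) (k : Fin K) : 0 ≤ D.rho k :=
  (div_pos (D.lam_pos k) (D.mu_pos k)).le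

lemma Gk_antitone (Γ : Measure ℝ) [IsFiniteMeasure Γ] : Antitone (Gk Γ) := fun _ _ hxy =>
  ENNReal.toReal_mono (measure_ne_top _ _) (measure_mono (Ioi_subset_Ioi hxy))

namespace IsWorkloadSol

variable {w u v : ℝ → ℝ}

lemma intervalIntegrable (hw : IsWorkloadSol D w) (k : Fin K) {a b : ℝ} (ha : 0 ≤ a)
    (hb : 0 ≤ b) : IntervalIntegrable (fun s => Gk (D.Γ k) (w s)) volume a b :=
  (hw.2.1 k a ha).symm.trans (hw.2.1 k b hb)

lemma eq_add_integral (hw : IsWorkloadSol D w) {a t : ℝ} (ha : 0 ≤ a) (hat : a ≤ t) :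
    w t = w a + (∑ k, D.rho k * ∫ s in a..t, Gk (D.Γ k) (w s)) - (t - a) := by
  have hsplit : ∀ k, (∫ s in (0:ℝ)..t, Gk (D.Γ k) (w s)) =
      (∫ s in (0:ℝ)..a, Gk (D.Γ k) (w s)) + ∫ s in a..t, Gk (D.Γ k) (w s) := fun k =>
    (intervalIntegral.integral_add_adjacent_intervals (hw.intervalIntegrable k le_rfl ha)
      (hw.intervalIntegrable k ha (ha.trans hat))).symm
  rw [hw.2.2 t (ha.trans hat), hw.2.2 a ha]
  simp only [hsplit, mul_add, Finset.sum_add_distrib]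
  ring

lemma monotoneOn_add_self (hw : IsWorkloadSol D w) : MonotoneOn (fun s => w s + s) (Ici 0) := by
  intro s hs t _ hst
  have : 0 ≤ ∑ k, D.rho k * ∫ u in s..t, Gk (D.Γ k) (w u) :=
    Finset.sum_nonneg fun k _ => mul_nonneg (D.rho_nonneg k)
      (intervalIntegral.integral_nonneg hst fun _ _ => ENNReal.toReal_nonneg)
  linarith [hw.eq_add_integral hs hst]

lemma continuousOn (hw : IsWorkloadSol D w) {T : ℝ} (hT : 0 ≤ T) : ContinuousOn w (Icc 0 T) := by
  refine ContinuousOn.congr ?_ fun t ht => hw.2.2 t ht.1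
  refine (continuousOn_const.add (continuousOn_finsetSum _ fun k _ =>
    continuousOn_const.mul ?_)).sub continuousOn_id
  simpa only [uIcc_of_le hT] using
    intervalIntegral.continuousOn_primitive_interval' (hw.2.1 k T hT) left_mem_uIcc

lemma exists_Icc_lt_add_self (hw : IsWorkloadSol D w) {t y : ℝ} (ht : 0 < t)
    (hy : y < w t + t) : ∃ d < t, ∀ s ∈ Icc d t, y < w s + s := by
  have hcont : ContinuousWithinAt (fun s => w s + s) (Icc 0 t) t :=
    ((hw.continuousOn ht.le).add continuousOn_id) t ⟨ht.le, le_rfl⟩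
  have hev := hcont.eventually (lt_mem_nhds hy)
  rw [nhdsWithin_Icc_eq_nhdsLE ht] at hev
  exact mem_nhdsLE_iff_exists_Icc_subset.1 hev

lemma sub_le_sub_of_le_on_Ioo (hu : IsWorkloadSol D u) (hv : IsWorkloadSol D v) {a t : ℝ}
    (ha : 0 ≤ a) (hat : a ≤ t) (huv : ∀ s ∈ Ioo a t, v s ≤ u s) :
    u t - v t ≤ u a - v a := by
  have hint : ∀ k, (∫ s in a..t, Gk (D.Γ k) (u s)) ≤ ∫ s in a..t, Gk (D.Γ k) (v s) := fun k =>
    intervalIntegral.integral_mono_on_of_le_Ioo hat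
      (hu.intervalIntegrable k ha (ha.trans hat)) (hv.intervalIntegrable k ha (ha.trans hat))
      fun s hs => Gk_antitone _ (huv s hs)
  have := Finset.sum_le_sum fun k (_ : k ∈ Finset.univ) =>
    mul_le_mul_of_nonneg_left (hint k) (D.rho_nonneg k)
  linarith [hu.eq_add_integral ha hat, hv.eq_add_integral ha hat]

/-- Compare on `[a, t]`, where `a` is the last time in `[0, t]` at which `u ≤ v`. -/
lemma le_of_apply_zero_eq (hu : IsWorkloadSol D u) (hv : IsWorkloadSol D v)
    (h0 : u 0 = v 0) {t : ℝ} (ht : 0 ≤ t) : u t ≤ v t := by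
  by_contra! hlt
  set A := Icc 0 t ∩ (fun s => u s - v s) ⁻¹' Iic 0
  have hA : IsCompact A := isCompact_Icc.of_isClosed_subset
    (((hu.continuousOn ht).sub (hv.continuousOn ht)).preimage_isClosed_of_isClosed
      isClosed_Icc isClosed_Iic) inter_subset_left
  have haA : sSup A ∈ A := hA.sSup_mem ⟨0, ⟨le_rfl, ht⟩, by simp [h0]⟩
  have hvu : ∀ s ∈ Ioo (sSup A) t, v s ≤ u s := fun s hs => by
    by_contra! hs'
    refine hs.1.not_ge (le_csSup hA.bddAbove ⟨⟨haA.1.1.trans hs.1.le, hs.2.le⟩, ?_⟩)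
    simp only [mem_preimage, mem_Iic]
    linarith
  have hd : u (sSup A) - v (sSup A) ≤ 0 := haA.2
  linarith [hu.sub_le_sub_of_le_on_Ioo hv haA.1.1 haA.1.2 hvu]

lemma eq_of_apply_zero_eq (hu : IsWorkloadSol D u) (hv : IsWorkloadSol D v)
    (h0 : u 0 = v 0) {t : ℝ} (ht : 0 ≤ t) : u t = v t :=
  (hu.le_of_apply_zero_eq hv h0 ht).antisymm (hv.le_of_apply_zero_eq hu h0.symm ht)

end IsWorkloadSol

end Workload

lemma exists_pos_measure_Ici_of_measure_Ioi_ne_zero {Γ : Measure ℝ} (h : Γ (Ioi 0) ≠ 0) :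
    ∃ δ > 0, 0 < Γ (Ici δ) := by
  rw [← iUnion_Ici_eq_Ioi_of_lt_of_tendsto (fun n : ℕ => Nat.one_div_pos_of_nat)
    tendsto_one_div_add_atTop_nhds_zero_nat, Ne, measure_iUnion_null_iff] at h
  push Not at h
  obtain ⟨n, hn⟩ := h
  exact ⟨_, Nat.one_div_pos_of_nat, pos_iff_ne_zero.2 hn⟩

lemma Data.measure_Ioi_zero {K : ℕ} (D : Data K) (k : Fin K) : D.Γ k (Ioi 0) = 1 := by
  rw [← prob_compl_eq_zero_iff measurableSet_Ioi, compl_Ioi, ← Iio_union_right]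
  exact measure_union_null (D.Γ_null_neg k) (D.Γ_noAtom k 0)

lemma Data.nonempty_fin {K : ℕ} (D : Data K) : Nonempty (Fin K) := by
  by_contra hK
  rw [not_nonempty_iff] at hK
  have := D.rho_gt_one
  simp only [Finset.univ_eq_empty, Finset.sum_empty] at this
  linarith

lemma shiftd_Ici_prod {x c : ℝ} (hx : 0 ≤ x) (hc : 0 ≤ c) :
    shiftd (Ici x ×ˢ Ici 0) c = Ici (x + c) ×ˢ Ici c := by
  ext p
  simp only [shiftd, shift, Q, mem_ofPred_eq, mem_prod, mem_Ici]
  constructor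
  · rintro ⟨-, h1, h2⟩
    exact ⟨by linarith, by linarith⟩
  · rintro ⟨h1, h2⟩
    exact ⟨⟨by linarith, by linarith⟩, by linarith, by linarith⟩

lemma kern_Ici_prod (Γ : Measure ℝ) [SFinite Γ] (v a b : ℝ) :
    kern Γ v (Ici a ×ˢ Ici b) = if 0 < v ∧ a ≤ v then (Γ (Ici b)).toReal else 0 := by
  by_cases hv : 0 < v
  · simp only [kern, deltaPlus, if_pos hv, Measure.prod_prod,
      Measure.dirac_apply' _ measurableSet_Ici]
    by_cases hav : a ≤ v <;> simp [hv, hav]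
  · simp [kern, deltaPlus, hv]

lemma integral_pos_of_nonneg_of_le_on_Icc {f : ℝ → ℝ} {a b c d : ℝ} (had : a ≤ d) (hdb : d < b)
    (hf : IntervalIntegrable f volume a b) (hf0 : ∀ s ∈ Icc a b, 0 ≤ f s) (hc : 0 < c)
    (hcf : ∀ s ∈ Icc d b, c ≤ f s) : 0 < ∫ s in a..b, f s := by
  have hd : d ∈ uIcc a b := mem_uIcc_of_le had hdb.le
  have h1 : 0 ≤ ∫ s in a..d, f s :=
    intervalIntegral.integral_nonneg had fun s hs => hf0 s ⟨hs.1, hs.2.trans hdb.le⟩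
  have h2 : (b - d) * c ≤ ∫ s in d..b, f s := by
    simpa using intervalIntegral.integral_mono_on hdb.le intervalIntegrable_const
      (hf.mono_set (uIcc_subset_uIcc hd right_mem_uIcc)) hcf
  rw [← intervalIntegral.integral_add_adjacent_intervals
    (hf.mono_set (uIcc_subset_uIcc left_mem_uIcc hd))
    (hf.mono_set (uIcc_subset_uIcc hd right_mem_uIcc))]
  nlinarith [mul_pos (sub_pos.2 hdb) hc]

lemma sSup_eq_of_Ico_subset_of_subset_Icc {S : Set ℝ} {b : ℝ} (hb : 0 ≤ b)
    (hlow : Ico 0 b ⊆ S) (hup : S ⊆ Icc 0 b) : sSup S = b := by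
  rcases hb.eq_or_lt with rfl | hb
  · rw [Icc_self, subset_singleton_iff_eq] at hup
    rcases hup with rfl | rfl <;> simp
  · have hS : BddAbove S := ⟨b, fun x hx => (hup hx).2⟩
    refine le_antisymm (csSup_le ⟨0, hlow ⟨le_rfl, hb⟩⟩ fun x hx => (hup hx).2) ?_
    calc b = sSup (Ico 0 b) := (csSup_Ico hb).symm
      _ ≤ sSup S := csSup_le_csSup hS (nonempty_Ico.2 hb) hlow

section Fluid

variable {K : ℕ} {D : Data K} {ϑ : Fin K → Measure (ℝ × ℝ)}
  {ζ : ℝ → Fin K → Measure (ℝ × ℝ)} {w : ℝ → ℝ}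

def IsFluidSolWith (D : Data K) (ϑ : Fin K → Measure (ℝ × ℝ))
    (ζ : ℝ → Fin K → Measure (ℝ × ℝ)) (w : ℝ → ℝ) : Prop :=
  IsWorkloadSol D w ∧ w 0 = wMeas ϑ ∧
    (∀ t : ℝ, 0 ≤ t → ∀ k, IsFiniteMeasure (ζ t k) ∧ ζ t k Qᶜ = 0) ∧
    (∀ k, ζ 0 k = ϑ k) ∧
    (∀ k, ∀ B : Set (ℝ × ℝ), B ⊆ Q → MeasurableSet B → ∀ t : ℝ, 0 ≤ t →
      IntervalIntegrable (fun s => kern (D.Γ k) (w s) (shiftd B (t - s))) volume 0 t ∧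
      ζ t k B = ϑ k (shiftd B t) +
        ENNReal.ofReal (D.lam k * ∫ s in (0:ℝ)..t, kern (D.Γ k) (w s) (shiftd B (t - s))))

lemma isFluidSol_iff : IsFluidSol D ϑ ζ ↔ ∃ w, IsFluidSolWith D ϑ ζ w := Iff.rfl

namespace IsFluidSolWith

lemma measure_Ici_prod (h : IsFluidSolWith D ϑ ζ w) (k : Fin K) {x t : ℝ} (hx : 0 ≤ x)
    (ht : 0 ≤ t) :
    IntervalIntegrable (fun s => kern (D.Γ k) (w s) (shiftd (Ici x ×ˢ Ici 0) (t - s)))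
      volume 0 t ∧
    ζ t k (Ici x ×ˢ Ici 0) = ϑ k (Ici (x + t) ×ˢ Ici t) + ENNReal.ofReal (D.lam k *
      ∫ s in (0:ℝ)..t, kern (D.Γ k) (w s) (shiftd (Ici x ×ˢ Ici 0) (t - s))) := by
  have := h.2.2.2.2 k _ (fun p hp => ⟨hx.trans hp.1, hp.2⟩)
    (measurableSet_Ici.prod measurableSet_Ici) t ht
  rwa [shiftd_Ici_prod hx ht] at this

lemma measure_Ici_prod_le (h : IsFluidSolWith D ϑ ζ w) (k : Fin K) {x t : ℝ} (ht : 0 ≤ t)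
    (hx : w t < x) : ζ t k (Ici x ×ˢ Ici 0) ≤ ϑ k (Ici (x + t) ×ˢ Ici 0) := by
  have hx0 : 0 ≤ x := (h.1.1 t ht).trans hx.le
  have hint : ∫ s in (0:ℝ)..t, kern (D.Γ k) (w s) (shiftd (Ici x ×ˢ Ici 0) (t - s)) = 0 := by
    rw [intervalIntegral.integral_congr (g := fun _ => 0), intervalIntegral.integral_zero]
    intro s hs
    rw [uIcc_of_le ht] at hs
    dsimp only
    rw [shiftd_Ici_prod hx0 (sub_nonneg.2 hs.2), kern_Ici_prod, if_neg]
    rintro ⟨-, hle⟩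
    linarith [h.1.monotoneOn_add_self hs.1 ht hs.2]
  rw [(h.measure_Ici_prod k hx0 ht).2, hint, mul_zero, ENNReal.ofReal_zero, add_zero]
  exact measure_mono (prod_mono_right (Ici_subset_Ici.2 ht))

lemma le_of_sum_measure_Ici_prod_pos (h : IsFluidSolWith D ϑ ζ w)
    (hbdd : BddAbove {x : ℝ | 0 ≤ x ∧ 0 < ∑ k, ϑ k (Ici x ×ˢ Ici (0:ℝ))}) {x t : ℝ}
    (ht : 0 ≤ t) (hpos : 0 < ∑ k, ζ t k (Ici x ×ˢ Ici 0)) : x ≤ w t := by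
  by_contra! hx
  have hϑ : ∑ k, ϑ k (Ici (x + t) ×ˢ Ici 0) = 0 := by
    by_contra hne
    have : x + t ≤ wMeas ϑ :=
      le_csSup hbdd ⟨by linarith [h.1.1 t ht], pos_iff_ne_zero.2 hne⟩
    linarith [h.2.1, h.1.monotoneOn_add_self self_mem_Ici ht ht]
  have := Finset.sum_le_sum fun k (_ : k ∈ Finset.univ) => h.measure_Ici_prod_le k ht hx
  rw [hϑ, nonpos_iff_eq_zero] at this
  exact hpos.ne' this

lemma measure_Ici_prod_pos (h : IsFluidSolWith D ϑ ζ w) (k : Fin K) {x t : ℝ} (ht : 0 < t)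
    (hx : 0 ≤ x) (hxw : x < w t) : 0 < ζ t k (Ici x ×ˢ Ici 0) := by
  obtain ⟨hint, heq⟩ := h.measure_Ici_prod k hx ht.le
  obtain ⟨δ, hδ, hΓδ⟩ :=
    exists_pos_measure_Ici_of_measure_Ioi_ne_zero (Γ := D.Γ k) (by simp [D.measure_Ioi_zero k])
  obtain ⟨d, hdt, hd⟩ := h.1.exists_Icc_lt_add_self ht (by linarith : x + t < w t + t)
  have hpos := integral_pos_of_nonneg_of_le_on_Icc (le_max_right (max d (t - δ)) 0)
    (max_lt (max_lt hdt (by linarith)) ht) hint (fun _ _ => ENNReal.toReal_nonneg)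
    (ENNReal.toReal_pos hΓδ.ne' (measure_ne_top _ _)) fun s hs => by
      have hs0 : 0 ≤ s := (le_max_right _ _).trans hs.1
      have hds : d ≤ s := ((le_max_left _ _).trans (le_max_left _ _)).trans hs.1
      have hδs : t - δ ≤ s := ((le_max_right _ _).trans (le_max_left _ _)).trans hs.1
      have hlt := hd s ⟨hds, hs.2⟩
      rw [shiftd_Ici_prod hx (sub_nonneg.2 hs.2), kern_Ici_prod,
        if_pos ⟨by linarith [hs.2], by linarith⟩]
      exact ENNReal.toReal_mono (measure_ne_top _ _)
        (measure_mono (Ici_subset_Ici.2 (by linarith)))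
  rw [heq]
  exact (ENNReal.ofReal_pos.2 (mul_pos (D.lam_pos k) hpos)).trans_le le_add_self

lemma wMeas_eq (h : IsFluidSolWith D ϑ ζ w)
    (hbdd : BddAbove {x : ℝ | 0 ≤ x ∧ 0 < ∑ k, ϑ k (Ici x ×ˢ Ici (0:ℝ))}) {t : ℝ}
    (ht : 0 ≤ t) : wMeas (ζ t) = w t := by
  rcases ht.eq_or_lt with rfl | ht
  · rw [show ζ 0 = ϑ from funext h.2.2.2.1, h.2.1]
  obtain ⟨k⟩ := D.nonempty_fin
  refine sSup_eq_of_Ico_subset_of_subset_Icc (h.1.1 t ht.le) (fun x hx => ⟨hx.1, ?_⟩)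
    fun x hx => ⟨hx.1, h.le_of_sum_measure_Ici_prod_pos hbdd ht.le hx.2⟩
  exact (h.measure_Ici_prod_pos k ht hx.1 hx.2).trans_le
    (Finset.single_le_sum (f := fun k => ζ t k (Ici x ×ˢ Ici 0)) (fun _ _ => zero_le) (Finset.mem_univ k))

end IsFluidSolWith

end Fluid

/-- For `ϑ ∈ I`, the fluid model solution `ζ` with initial measure `ϑ`, and
the workload fluid model solution `w` with `w(0) = w_ϑ`, one has `w_{ζ(t)} = w(t)` for all
`t ≥ 0`. -/
theorem fluid_workload_edge {K : ℕ} (D : Data K)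
    (ϑ : Fin K → MeasureTheory.Measure (ℝ × ℝ)) (hϑ : MemI D ϑ)
    (ζ : ℝ → Fin K → MeasureTheory.Measure (ℝ × ℝ)) (hζ : IsFluidSol D ϑ ζ)
    (w : ℝ → ℝ) (hw : IsWorkloadSol D w) (hw0 : w 0 = wMeas ϑ) :
    ∀ t : ℝ, 0 ≤ t → wMeas (ζ t) = w t := by
  obtain ⟨w', hζw'⟩ := isFluidSol_iff.1 hζ
  intro t ht
  rw [hw.eq_of_apply_zero_eq hζw'.1 (hw0.trans hζw'.2.1.symm) ht]
  exact hζw'.wMeas_eq hϑ.2.2.2.1 ht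

end OverloadedFIFO
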